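/- Let h(z;τ) = ∫_ℝ e^{πiτx² − 2πzx}/cosh(πx) dx for z ∈ ℂ, τ in the upper half plane. Then h(z;τ) + h(z+1;τ) = (2/√(−iτ)) e^{πi(z+1/2)²/τ}. -/

import Mathlib

open Real MeasureTheory Complex

/-- The Mordell integral `h(z;τ) = ∫_ℝ e^{πiτx² - 2πzx} / cosh(πx) dx`. -/
noncomputable def mordellH (z τ : ℂ) : ℂ :=
  ∫ x : ℝ, Complex.exp ((π : ℂ) * Complex.I * τ * (x : ℂ) ^ 2 - 2 * (π : ℂ) * z * (x : ℂ)) /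
    Complex.cosh ((π : ℂ) * (x : ℂ))

lemma cosh_pi_real (x : ℝ) : Complex.cosh ((π : ℂ) * (x : ℂ)) = (Real.cosh (π * x) : ℂ) := by
  push_cast [Complex.ofReal_cosh]
  rfl

lemma cosh_pi_ne_zero (x : ℝ) : Complex.cosh ((π : ℂ) * (x : ℂ)) ≠ 0 := by
  rw [cosh_pi_real]
  exact_mod_cast (Real.cosh_pos (π * x)).ne'

lemma mordell_integrable (τ : ℂ) (hτ : 0 < τ.im) (w : ℂ) :
    Integrable (fun x : ℝ => Complex.exp ((π : ℂ) * Complex.I * τ * (x : ℂ) ^ 2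
        - 2 * (π : ℂ) * w * (x : ℂ)) / Complex.cosh ((π : ℂ) * (x : ℂ))) := by
  have hb : ((π : ℂ) * Complex.I * τ).re < 0 := by
    simp only [Complex.mul_re, Complex.mul_im, Complex.I_re, Complex.I_im, Complex.ofReal_re,
      Complex.ofReal_im]
    nlinarith [Real.pi_pos]
  have hg : Integrable (fun x : ℝ => Complex.exp ((π : ℂ) * Complex.I * τ * (x : ℂ) ^ 2
      + (-(2 * (π : ℂ) * w)) * (x : ℂ) + 0)) := integrable_cexp_quadratic' hb _ _
  refine (hg.mono ?_ ?_)
  · apply Continuous.aestronglyMeasurable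
    exact (Complex.continuous_exp.comp (by continuity)).div (by continuity)
      (fun x => cosh_pi_ne_zero x)
  · filter_upwards with x
    rw [norm_div, cosh_pi_real]
    have h1 : (1 : ℝ) ≤ ‖((Real.cosh (π * x) : ℝ) : ℂ)‖ := by
      rw [Complex.norm_real, Real.norm_eq_abs, abs_of_pos (Real.cosh_pos _)]
      exact Real.one_le_cosh _
    calc ‖Complex.exp _‖ / ‖((Real.cosh (π * x) : ℝ) : ℂ)‖ ≤ ‖Complex.exp ((π : ℂ) * Complex.I * τ * (x : ℂ) ^ 2 - 2 * (π : ℂ) * w * (x : ℂ))‖ / 1 :=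
          div_le_div_of_nonneg_left (norm_nonneg _) one_pos h1 |>.trans_eq rfl
      _ = ‖Complex.exp ((π : ℂ) * Complex.I * τ * (x : ℂ) ^ 2 + (-(2 * (π : ℂ) * w)) * (x : ℂ) + 0)‖ := by
          rw [div_one]; ring_nf

/-- `h(z) + h(z+1) = (2/√(-iτ)) e^{πi(z+1/2)²/τ}`. -/
theorem mordellH_add_one (τ : ℂ) (hτ : 0 < τ.im) (z : ℂ) :
    mordellH z τ + mordellH (z + 1) τ =
      2 / ((-Complex.I * τ) ^ ((1:ℂ)/2)) *
        Complex.exp ((π : ℂ) * Complex.I * (z + 1/2) ^ 2 / τ) := by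
  have hτ0 : τ ≠ 0 := fun h => by simp [h] at hτ
  have hb : ((π : ℂ) * Complex.I * τ).re < 0 := by
    simp only [Complex.mul_re, Complex.mul_im, Complex.I_re, Complex.I_im, Complex.ofReal_re,
      Complex.ofReal_im]
    nlinarith [Real.pi_pos]
  rw [mordellH, mordellH, ← integral_add (mordell_integrable τ hτ z) (mordell_integrable τ hτ (z+1))]
  have key : ∀ x : ℝ,
      Complex.exp ((π : ℂ) * Complex.I * τ * (x : ℂ) ^ 2 - 2 * (π : ℂ) * z * (x : ℂ)) /
        Complex.cosh ((π : ℂ) * (x : ℂ)) +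
      Complex.exp ((π : ℂ) * Complex.I * τ * (x : ℂ) ^ 2 - 2 * (π : ℂ) * (z + 1) * (x : ℂ)) /
        Complex.cosh ((π : ℂ) * (x : ℂ)) =
      2 * Complex.exp ((π : ℂ) * Complex.I * τ * (x : ℂ) ^ 2
        + (-(2 * (π : ℂ) * (z + 1/2))) * (x : ℂ) + 0) := by
    intro x
    rw [← add_div, div_eq_iff (cosh_pi_ne_zero x), Complex.cosh]
    have e1 : (π : ℂ) * Complex.I * τ * (x : ℂ) ^ 2 - 2 * (π : ℂ) * z * (x : ℂ) =
        ((π : ℂ) * Complex.I * τ * (x : ℂ) ^ 2 + (-(2 * (π : ℂ) * (z + 1/2))) * (x : ℂ) + 0)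
        + (π : ℂ) * (x : ℂ) := by ring
    have e2 : (π : ℂ) * Complex.I * τ * (x : ℂ) ^ 2 - 2 * (π : ℂ) * (z + 1) * (x : ℂ) =
        ((π : ℂ) * Complex.I * τ * (x : ℂ) ^ 2 + (-(2 * (π : ℂ) * (z + 1/2))) * (x : ℂ) + 0)
        + (-((π : ℂ) * (x : ℂ))) := by ring
    rw [e1, e2]
    simp only [Complex.exp_add]
    ring
  rw [MeasureTheory.integral_congr_ae (Filter.Eventually.of_forall key),
    MeasureTheory.integral_const_mul, integral_cexp_quadratic hb]
  have harg : (-Complex.I * τ).arg ≠ π := by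
    intro h
    have := Complex.arg_eq_pi_iff.mp h
    simp only [Complex.mul_re, Complex.neg_re, Complex.I_re, Complex.neg_im, Complex.I_im] at this
    nlinarith [this.1]
  have hcoef : ((π : ℂ) / -((π : ℂ) * Complex.I * τ)) ^ ((1:ℝ) / 2 : ℂ) =
      ((-Complex.I * τ) ^ ((1:ℂ)/2))⁻¹ := by
    have hπ : (π : ℂ) ≠ 0 := by exact_mod_cast Real.pi_ne_zero
    have : (π : ℂ) / -((π : ℂ) * Complex.I * τ) = (-Complex.I * τ)⁻¹ := by
      field_simp
    rw [this, ← Complex.inv_cpow _ _ harg]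
    norm_num
  have hexp : (0 : ℂ) - (-(2 * (π : ℂ) * (z + 1/2))) ^ 2 / (4 * ((π : ℂ) * Complex.I * τ)) =
      (π : ℂ) * Complex.I * (z + 1/2) ^ 2 / τ := by
    have hπ : (π : ℂ) ≠ 0 := by exact_mod_cast Real.pi_ne_zero
    have h4 : (4:ℂ) * ((π : ℂ) * Complex.I * τ) ≠ 0 := by
      simp [hπ, Complex.I_ne_zero, hτ0]
    rw [zero_sub, ← neg_div, div_eq_div_iff h4 hτ0]
    linear_combination (-4*(π:ℂ)^2*(z+1/2)^2*τ) * Complex.I_sq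
  rw [hexp]
  rw [show ((1:ℂ)/2) = ((1:ℝ)/2 : ℂ) by norm_num] at hcoef ⊢
  rw [hcoef]
  ring
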